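/- arXiv:1709.07314 — 5 statements merged into one kernel-verified Lean document; each statement's English description precedes it below -/
import Mathlib

section
/- Let T be an EL_lhs TBox (all concept inclusions have a concept name on the right-hand side). If I is an essential T-countermodel, then the cardinality of the domain of I is at most the size of T. -/
/-- EL concept expressions over concept names `C` and role names `R`. -/
inductive ELC (C R : Type) : Type where
  | top : ELC C R
  | cn : C → ELC C R
  | conj : ELC C R → ELC C R → ELC C R
  | ex : R → ELC C R → ELC C R

/-- An interpretation (possibly with empty domain, so that subtree removal
is always defined). -/
structure Interp (C R : Type) where
  dom : Type
  cname : C → Set dom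
  rname : R → Set (dom × dom)

/-- Semantics of EL concept expressions. -/
def Interp.sem {C R : Type} (I : Interp C R) : ELC C R → Set I.dom
  | .top => Set.univ
  | .cn A => I.cname A
  | .conj c d => I.sem c ∩ I.sem d
  | .ex r c => {x | ∃ y, (x, y) ∈ I.rname r ∧ y ∈ I.sem c}

/-- The edge relation of the underlying directed graph: union of all role
interpretations. -/
def Interp.edge {C R : Type} (I : Interp C R) (a b : I.dom) : Prop :=
  ∃ r, (a, b) ∈ I.rname r

/-- The restriction of an interpretation to a subset of its domain. -/
def Interp.restrict {C R : Type} (I : Interp C R) (S : Set I.dom) : Interp C R where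
  dom := {x // x ∈ S}
  cname A := {x | x.1 ∈ I.cname A}
  rname r := {p | (p.1.1, p.2.1) ∈ I.rname r}

/-- An `EL_lhs` TBox: a finite set (list) of concept inclusions `C ⊑ A`
with `C` an EL concept expression and `A` a concept name. -/
def Interp.satT {C R : Type} (I : Interp C R) (T : List (ELC C R × C)) : Prop :=
  ∀ p ∈ T, I.sem p.1 ⊆ I.cname p.2

/-- A ditree interpretation: the underlying directed graph is a directed
tree with root `root`, and distinct role names have disjoint
interpretations. -/
structure Ditree (C R : Type) extends Interp C R where
  root : toInterp.dom
  no_into_root : ∀ a : toInterp.dom, ¬ toInterp.edge a root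
  unique_parent : ∀ b a a' : toInterp.dom, ∀ r r' : R,
      (a, b) ∈ toInterp.rname r → (a', b) ∈ toInterp.rname r' → a = a' ∧ r = r'
  reach_root : ∀ b : toInterp.dom, Relation.ReflTransGen toInterp.edge root b
  role_disj : ∀ r r' : R, r ≠ r' → ∀ p, p ∈ toInterp.rname r → p ∉ toInterp.rname r'

/-- The size of a concept expression: the length of its string
representation, with concept and role names of length one. -/
def ELC.size {C R : Type} : ELC C R → ℕ
  | .top => 1
  | .cn _ => 1
  | .conj c d => c.size + d.size + 1
  | .ex _ c => c.size + 2

/-- The size of an `EL_lhs` TBox. -/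
def tboxSize {C R : Type} (T : List (ELC C R × C)) : ℕ :=
  (T.map fun p => p.1.size + 1).sum

/-- `D` is an essential `T`-countermodel: it is not a model of `T`, it
becomes a model of `T` when its root is removed, and it becomes a model of
`T` when the subtree rooted at any non-root node is removed. -/
def Essential {C R : Type} (T : List (ELC C R × C)) (D : Ditree C R) : Prop :=
  (¬ D.toInterp.satT T) ∧
  (D.toInterp.restrict {x | x ≠ D.root}).satT T ∧
  ∀ d : D.toInterp.dom, d ≠ D.root →
    (D.toInterp.restrict {x | ¬ Relation.ReflTransGen D.toInterp.edge d x}).satT T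

/-! The violation of some inclusion `C ⊑ A` of `T` must sit at the root, since removing the root
repairs it and truth of EL concepts depends only on the subtree below a point. A point satisfying
`C` keeps satisfying it after removing any subtree that avoids a set of at most `|C|` witnesses (one
`r`-successor per existential restriction). Essentiality forbids removing any non-root subtree
without repairing the violation, so every non-root node is one of those witnesses. -/

open Relation

namespace Interp

variable {C R : Type}

/-- `I|⁻_{d↓}`: the interpretation `I` with the subtree rooted at `d` removed. -/
def pruneAt (I : Interp C R) (d : I.dom) : Interp C R :=
  I.restrict {z | ¬ ReflTransGen I.edge d z}

theorem mem_sem_restrict_of_forall_reach_mem (I : Interp C R) (U : Set I.dom) (c : ELC C R)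
    {x : I.dom} (hx : x ∈ U) (hU : ∀ z, ReflTransGen I.edge x z → z ∈ U) (hc : x ∈ I.sem c) :
    (⟨x, hx⟩ : (I.restrict U).dom) ∈ (I.restrict U).sem c := by
  induction c generalizing x with
  | top => trivial
  | cn A => exact hc
  | conj c d ihc ihd => exact ⟨ihc hx hU hc.1, ihd hx hU hc.2⟩
  | ex r c ih =>
    obtain ⟨y, hxy, hy⟩ := hc
    have hedge : I.edge x y := ⟨r, hxy⟩
    have hyU : y ∈ U := hU y (.single hedge)
    exact ⟨⟨y, hyU⟩, hxy, ih hyU (fun z hz => hU z (.head hedge hz)) hy⟩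

end Interp

namespace Ditree

variable {C R : Type} (D : Ditree C R)

theorem not_reflTransGen_root {d : D.dom} (hd : d ≠ D.root) :
    ¬ ReflTransGen D.edge d D.root := by
  intro h
  rcases h.cases_tail with h | ⟨z, -, hz⟩
  · exact hd h.symm
  · exact D.no_into_root z hz

theorem reflTransGen_of_edge_of_ne {d x y : D.dom} (hxy : D.edge x y)
    (hdy : ReflTransGen D.edge d y) (hne : d ≠ y) : ReflTransGen D.edge d x := by
  rcases hdy.cases_tail with h | ⟨z, hdz, ⟨r', hzy⟩⟩
  · exact absurd h.symm hne
  · obtain ⟨r, hxy⟩ := hxy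
    exact (D.unique_parent y z x r' r hzy hxy).1 ▸ hdz

theorem mem_sem_restrict_ne_root (c : ELC C R) {x : D.dom} (hx : x ≠ D.root)
    (hc : x ∈ D.sem c) :
    (⟨x, hx⟩ : (D.restrict {z | z ≠ D.root}).dom) ∈ (D.restrict {z | z ≠ D.root}).sem c :=
  D.mem_sem_restrict_of_forall_reach_mem _ c hx
    (fun _ hz hzr => D.not_reflTransGen_root hx (hzr ▸ hz)) hc

theorem exists_witnesses_of_mem_sem (c : ELC C R) {x : D.dom} (hc : x ∈ D.sem c) :
    ∃ S : Set D.dom, S.Finite ∧ S.ncard ≤ c.size ∧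
      ∀ d ∉ S, ∀ hdx : ¬ ReflTransGen D.edge d x,
        (⟨x, hdx⟩ : (D.pruneAt d).dom) ∈ (D.pruneAt d).sem c := by
  induction c generalizing x with
  | top => exact ⟨∅, Set.finite_empty, by simp, fun _ _ _ => trivial⟩
  | cn A => exact ⟨∅, Set.finite_empty, by simp, fun _ _ _ => hc⟩
  | conj c c' ihc ihc' =>
    obtain ⟨S, hS, hScard, hSw⟩ := ihc hc.1
    obtain ⟨S', hS', hS'card, hS'w⟩ := ihc' hc.2
    refine ⟨S ∪ S', hS.union hS', ?_, fun d hd hdx =>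
      ⟨hSw d (fun h => hd (.inl h)) hdx, hS'w d (fun h => hd (.inr h)) hdx⟩⟩
    calc (S ∪ S').ncard ≤ S.ncard + S'.ncard := Set.ncard_union_le S S'
      _ ≤ (c.conj c').size := by simp only [ELC.size]; omega
  | ex r c ih =>
    obtain ⟨y, hxy, hy⟩ := hc
    obtain ⟨S, hS, hScard, hSw⟩ := ih hy
    refine ⟨insert y S, hS.insert y, ?_, fun d hd hdx => ?_⟩
    · calc (insert y S).ncard ≤ S.ncard + 1 := Set.ncard_insert_le y S
        _ ≤ (ELC.ex r c).size := by simp only [ELC.size]; omega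
    · have hdy : ¬ ReflTransGen D.edge d y := fun h =>
        hdx (D.reflTransGen_of_edge_of_ne ⟨r, hxy⟩ h fun hdy => hd (hdy ▸ Set.mem_insert y S))
      exact ⟨⟨y, hdy⟩, hxy, hSw d (fun h => hd (Set.mem_insert_of_mem y h)) hdy⟩

end Ditree

theorem finite_and_natCard_le_of_forall_ne_mem {α : Type*} (a : α) {S : Set α} (hS : S.Finite)
    (h : ∀ x, x ≠ a → x ∈ S) : Finite α ∧ Nat.card α ≤ S.ncard + 1 := by
  have hcover : (Set.univ : Set α) ⊆ insert a S := fun x _ => by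
    by_cases hx : x = a
    · exact .inl hx
    · exact .inr (h x hx)
  refine ⟨Set.finite_univ_iff.mp ((hS.insert a).subset hcover), ?_⟩
  calc Nat.card α = (Set.univ : Set α).ncard := (Set.ncard_univ α).symm
    _ ≤ (insert a S).ncard := Set.ncard_le_ncard hcover (hS.insert a)
    _ ≤ S.ncard + 1 := Set.ncard_insert_le a S

theorem size_add_one_le_tboxSize {C R : Type} {T : List (ELC C R × C)} {p : ELC C R × C}
    (hp : p ∈ T) : p.1.size + 1 ≤ tboxSize T :=
  List.le_sum_of_mem (List.mem_map_of_mem hp)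

/-- an essential `T`-countermodel has at most `|T|` elements. -/
theorem essential_countermodel_small {C R : Type} (T : List (ELC C R × C))
    (D : Ditree C R) (h : Essential T D) :
    Finite D.toInterp.dom ∧ Nat.card D.toInterp.dom ≤ tboxSize T := by
  obtain ⟨hviolated, hroot, hsubtree⟩ := h
  obtain ⟨p, hpT, hviolation⟩ : ∃ p ∈ T, ¬ D.sem p.1 ⊆ D.cname p.2 := by
    simpa [Interp.satT] using hviolated
  obtain ⟨x, hxC, hxA⟩ := Set.not_subset.mp hviolation
  obtain rfl : x = D.root := by
    by_contra hx
    exact hxA (hroot p hpT (D.mem_sem_restrict_ne_root p.1 hx hxC))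
  obtain ⟨S, hS, hScard, hSw⟩ := D.exists_witnesses_of_mem_sem p.1 hxC
  have hcover : ∀ d, d ≠ D.root → d ∈ S := fun d hd => by
    by_contra hdS
    exact hxA (hsubtree d hd p hpT (hSw d hdS (D.not_reflTransGen_root hd)))
  obtain ⟨hfin, hcard⟩ := finite_and_natCard_le_of_forall_ne_mem D.root hS hcover
  refine ⟨hfin, ?_⟩
  calc Nat.card D.dom ≤ S.ncard + 1 := hcard
    _ ≤ p.1.size + 1 := Nat.add_le_add_right hScard 1
    _ ≤ tboxSize T := size_add_one_le_tboxSize hpT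
end

section
/- The product I × J of two ditree interpretations I and J is a disjoint union of ditree interpretations. -/
/-- The product of two interpretations. -/
def Interp.prod {C R : Type} (I J : Interp C R) : Interp C R where
  dom := I.dom × J.dom
  cname A := {p | p.1 ∈ I.cname A ∧ p.2 ∈ J.cname A}
  rname r := {q | (q.1.1, q.2.1) ∈ I.rname r ∧ (q.1.2, q.2.2) ∈ J.rname r}

/-- `I` is a disjoint union of ditree interpretations: distinct role names
have disjoint interpretations, every node has at most one incoming edge
(with a unique label), and every node is reachable by a directed path from
a node with no incoming edge (the root of its component); equivalently,
every weakly connected component of the underlying graph is a directed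
tree. -/
def IsDitreeForest {C R : Type} (K : Interp C R) : Prop :=
  (∀ r r' : R, r ≠ r' → ∀ p, p ∈ K.rname r → p ∉ K.rname r') ∧
  (∀ b a a' : K.dom, ∀ r r' : R,
      (a, b) ∈ K.rname r → (a', b) ∈ K.rname r' → a = a' ∧ r = r') ∧
  ∀ x : K.dom, ∃ ρ : K.dom, (∀ a, ¬ K.edge a ρ) ∧ Relation.ReflTransGen K.edge ρ x

namespace Interp

variable {C R : Type}

def RolesDisjoint (K : Interp C R) : Prop :=
  ∀ r r' : R, r ≠ r' → ∀ p, p ∈ K.rname r → p ∉ K.rname r'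

def UniqueParent (K : Interp C R) : Prop :=
  ∀ b a a' : K.dom, ∀ r r' : R, (a, b) ∈ K.rname r → (a', b) ∈ K.rname r' → a = a' ∧ r = r'

def IsSource (K : Interp C R) (ρ : K.dom) : Prop :=
  ∀ a, ¬ K.edge a ρ

variable {I J : Interp C R}

theorem rolesDisjoint_prod (hI : I.RolesDisjoint) : (I.prod J).RolesDisjoint :=
  fun r r' hrr' _ hp hp' => hI r r' hrr' _ hp.1 hp'.1

theorem uniqueParent_prod (hI : I.UniqueParent) (hJ : J.UniqueParent) :
    (I.prod J).UniqueParent := by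
  rintro ⟨b₁, b₂⟩ ⟨a₁, a₂⟩ ⟨a₁', a₂'⟩ r r' ⟨hI₁, hJ₁⟩ ⟨hI₂, hJ₂⟩
  obtain ⟨rfl, rfl⟩ := hI b₁ a₁ a₁' r r' hI₁ hI₂
  obtain ⟨rfl, -⟩ := hJ b₂ a₂ a₂' r r hJ₁ hJ₂
  exact ⟨rfl, rfl⟩

theorem prod_edge {a b : I.dom} {a' b' : J.dom} {r : R} (h : (a, b) ∈ I.rname r)
    (h' : (a', b') ∈ J.rname r) : (I.prod J).edge (a, a') (b, b') :=
  ⟨r, h, h'⟩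

theorem isSource_prod_left {ρ : I.dom} (hρ : I.IsSource ρ) (e : J.dom) :
    (I.prod J).IsSource (ρ, e) :=
  fun _ ⟨r, h, _⟩ => hρ _ ⟨r, h⟩

theorem exists_isSource_reflTransGen_prod (hI : I.UniqueParent) {ρ d : I.dom}
    (hρ : I.IsSource ρ) (hd : Relation.ReflTransGen I.edge ρ d) (e : J.dom) :
    ∃ σ, (I.prod J).IsSource σ ∧ Relation.ReflTransGen (I.prod J).edge σ (d, e) := by
  induction hd generalizing e with
  | refl => exact ⟨(ρ, e), isSource_prod_left hρ e, .refl⟩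
  | @tail b c _ hbc ih =>
    obtain ⟨r, hr⟩ := hbc
    by_cases hparent : ∃ e', (e', e) ∈ J.rname r
    · obtain ⟨e', he'⟩ := hparent
      obtain ⟨σ, hσ, hσe'⟩ := ih e'
      exact ⟨σ, hσ, hσe'.tail (prod_edge hr he')⟩
    · refine ⟨(c, e), ?_, .refl⟩
      rintro ⟨a₁, a₂⟩ ⟨r', h₁, h₂⟩
      obtain ⟨rfl, rfl⟩ := hI c a₁ b r' r h₁ hr
      exact hparent ⟨a₂, h₂⟩

end Interp

/-- the product of two ditree interpretations is a disjoint
union of ditree interpretations. -/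
theorem prod_ditree_forest {C R : Type} (D E : Ditree C R) :
    IsDitreeForest (D.toInterp.prod E.toInterp) := by
  refine ⟨Interp.rolesDisjoint_prod D.role_disj,
    Interp.uniqueParent_prod D.unique_parent E.unique_parent, ?_⟩
  rintro ⟨d, e⟩
  exact Interp.exists_isSource_reflTransGen_prod D.unique_parent D.no_into_root (D.reach_root d) e
end

section
/- Fix role names r and s, and for a word σ = σ¹σ²...σⁿ ∈ {r,s}ⁿ let ∃σ.C abbreviate ∃σ¹.∃σ²...∃σⁿ.C. Let T_σ = {A ⊑ ∃σ.M ⊓ X_0} ∪ T_0 where T_0 = {X_i ⊑ ∃r.X_{i+1} ⊓ ∃s.X_{i+1} : 0 ≤ i < n}. Then for distinct words σ, σ' ∈ {r,s}ⁿ of length n, T_σ does not entail A ⊑ ∃σ'.M. -/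
/-- The pairwise distinct concept names `A`, `M`, `X_0, X_1, …`. -/
inductive CN : Type where
  | A : CN
  | M : CN
  | X : ℕ → CN

/-- The two distinct role names `r` and `s`. -/
inductive RN : Type where
  | r : RN
  | s : RN

/-- `∃σ.C` for a word `σ` over `{r,s}`: nested existential restrictions. -/
def exSeq (w : List RN) (c : ELC CN RN) : ELC CN RN :=
  w.foldr ELC.ex c

/-- The TBox `T_0 = {X_i ⊑ ∃r.X_{i+1} ⊓ ∃s.X_{i+1} : 0 ≤ i < n}`. -/
def T0 (n : ℕ) : List (ELC CN RN × ELC CN RN) :=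
  (List.range n).map fun i =>
    (.cn (.X i), .conj (.ex .r (.cn (.X (i + 1)))) (.ex .s (.cn (.X (i + 1)))))

/-- The TBox `T_σ = {A ⊑ ∃σ.M ⊓ X_0} ∪ T_0`. -/
def Tsig (n : ℕ) (σ : List RN) : List (ELC CN RN × ELC CN RN) :=
  (.cn .A, .conj (exSeq σ (.cn .M)) (.cn (.X 0))) :: T0 n

/-- `T ⊨ c ⊑ d`: the inclusion holds in every model of the TBox `T`. -/
def Entails (T : List (ELC CN RN × ELC CN RN)) (c d : ELC CN RN) : Prop :=
  ∀ I : Interp CN RN, (∀ p ∈ T, I.sem p.1 ⊆ I.sem p.2) → I.sem c ⊆ I.sem d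

/-! The words over `{r,s}` form a tree in which every node has an `r`- and an `s`-successor, so
making every `X_i` true everywhere satisfies `T_0`. Putting `A` at the root and `M` only at the
node `σ` satisfies `A ⊑ ∃σ.M ⊓ X_0`, while `∃σ'.M` holds at the root only when `σ' = σ`. -/

def Interp.Models {C R : Type} (I : Interp C R) (T : List (ELC C R × ELC C R)) : Prop :=
  ∀ p ∈ T, I.sem p.1 ⊆ I.sem p.2

def wordInterp {C R : Type} (cname : C → Set (List R)) : Interp C R where
  dom := List R
  cname := cname
  rname ρ := {p | p.2 = p.1 ++ [ρ]}

theorem mem_wordInterp_sem_foldr_ex {C R : Type} (cname : C → Set (List R)) (w : List R)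
    (c : ELC C R) (x : List R) :
    x ∈ (wordInterp cname).sem (w.foldr ELC.ex c) ↔ x ++ w ∈ (wordInterp cname).sem c := by
  induction w generalizing x with
  | nil => simp
  | cons ρ w ih =>
    change (∃ y, y = x ++ [ρ] ∧ y ∈ _) ↔ _
    rw [exists_eq_left, ih, List.append_assoc, List.singleton_append]

def markedTree (σ : List RN) : Interp CN RN :=
  wordInterp fun
    | .A => {[]}
    | .M => {σ}
    | .X _ => Set.univ

theorem nil_mem_markedTree_sem_exSeq_M_iff (σ w : List RN) :
    [] ∈ (markedTree σ).sem (exSeq w (.cn .M)) ↔ w = σ :=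
  (mem_wordInterp_sem_foldr_ex _ w _ []).trans Iff.rfl

theorem markedTree_models_Tsig (n : ℕ) (σ : List RN) : (markedTree σ).Models (Tsig n σ) := by
  intro p hp
  rcases List.mem_cons.mp hp with rfl | hp
  · rintro x rfl
    exact ⟨(nil_mem_markedTree_sem_exSeq_M_iff σ σ).mpr rfl, trivial⟩
  · obtain ⟨i, -, rfl⟩ := List.mem_map.mp hp
    intro (x : List RN) _
    exact ⟨⟨x ++ [RN.r], rfl, trivial⟩, ⟨x ++ [RN.s], rfl, trivial⟩⟩

theorem Tsig_not_entails_general {n : ℕ} (σ σ' : List RN)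
    (hne : σ ≠ σ') :
    ¬ Entails (Tsig n σ) (.cn .A) (exSeq σ' (.cn .M)) := fun hE =>
  hne ((nil_mem_markedTree_sem_exSeq_M_iff σ σ').mp
    (hE (markedTree σ) (markedTree_models_Tsig n σ) rfl)).symm

/-- for distinct words `σ, σ'` of length `n` over `{r,s}`,
`T_σ` does not entail `A ⊑ ∃σ'.M`. -/
theorem Tsig_not_entails {n : ℕ} (σ σ' : List RN)
    (h1 : σ.length = n) (h2 : σ'.length = n) (hne : σ ≠ σ') :
    ¬ Entails (Tsig n σ) (.cn .A) (exSeq σ' (.cn .M)) :=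
  Tsig_not_entails_general σ σ' hne
end

section
/- Let T be an acyclic EL TBox, D an EL concept expression, and suppose T ⊨ A_1 ⊓ ... ⊓ A_n ⊓ ∃r_1.C_1 ⊓ ... ⊓ ∃r_m.C_m ⊑ D, where the A_i are concept names and the C_j are EL concept expressions (m, n ≥ 0). Then: (a) if D is a concept name such that T contains no concept equivalence D ≡ C, there exists i ≤ n such that T ⊨ A_i ⊑ D; (b) if D has the form ∃r.D', then either there exists i ≤ n with T ⊨ A_i ⊑ ∃r.D', or there exists j ≤ m with r_j = r and T ⊨ C_j ⊑ D'. -/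
/-- The concept names occurring in a concept expression. -/
def ELC.names {C R : Type} : ELC C R → Set C
  | .top => ∅
  | .cn a => {a}
  | .conj c d => c.names ∪ d.names
  | .ex _ c => c.names

/-- An axiom of an acyclic TBox: `lhs ⊑ rhs` if `isEq = false`, and the
concept equivalence `lhs ≡ rhs` if `isEq = true`. -/
structure AxEL (C R : Type) where
  lhs : C
  rhs : ELC C R
  isEq : Bool

/-- `I` satisfies the axiom. -/
def satAx {C R : Type} (I : Interp C R) (ax : AxEL C R) : Prop :=
  I.cname ax.lhs ⊆ I.sem ax.rhs ∧ (ax.isEq = true → I.sem ax.rhs ⊆ I.cname ax.lhs)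

/-- An acyclic EL TBox: no concept name occurs more than once as a
left-hand side, and there are no cyclic definitions. -/
def AcyclicTBox {C R : Type} (T : List (AxEL C R)) : Prop :=
  T.Pairwise (fun a b => a.lhs ≠ b.lhs) ∧
  ∀ A : C, ¬ Relation.TransGen
      (fun X Y => ∃ ax ∈ T, ax.lhs = X ∧ Y ∈ ax.rhs.names) A A

/-- `T ⊨ c ⊑ d`: the inclusion holds in every model of `T`. -/
def AEnt {C R : Type} (T : List (AxEL C R)) (c d : ELC C R) : Prop :=
  ∀ I : Interp C R, (∀ ax ∈ T, satAx I ax) → I.sem c ⊆ I.sem d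

/-- Conjunction of a list of concepts (`⊤` for the empty list). -/
def conjList {C R : Type} (l : List (ELC C R)) : ELC C R :=
  l.foldr ELC.conj .top

/-! Suppose every `A_i ⊑ D` has a countermodel with point `m_i`, and pick for each `∃r_j.C_j` a
model with a `C_j`-point `n_j`, refuting `D'` if `D = ∃r_j.D'`. Glue the disjoint union of these models under a fresh root that
inherits the concept names and role successors of every `m_i`, and has an `r_j`-edge to each
`n_j`; every concept true at some `m_i` is then true at the root. To make the result a model of
`T`, close the root's concept names under the defined names `A ≡ C` whose definition `C` it
satisfies (a least fixpoint); as left-hand sides are unique, each name the root receives has only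
definitions it satisfies. The root satisfies the left-hand side of the entailment, hence `D`; but
its concept names and role successors all come from the pieces, so `D` holds at some `m_i` or,
when `D = ∃r.D'`, `D'` holds at some `n_j` with `r_j = r`. -/

namespace Interp

variable {C R : Type} {T : List (AxEL C R)}

def IsModel (I : Interp C R) (T : List (AxEL C R)) : Prop :=
  ∀ ax ∈ T, satAx I ax

theorem not_aEnt_iff {c d : ELC C R} :
    ¬ AEnt T c d ↔ ∃ I : Interp C R, I.IsModel T ∧ ∃ x ∈ I.sem c, x ∉ I.sem d := by
  simp [AEnt, IsModel, Set.not_subset]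

theorem mem_sem_conjList {I : Interp C R} {l : List (ELC C R)} {x : I.dom} :
    x ∈ I.sem (conjList l) ↔ ∀ c ∈ l, x ∈ I.sem c := by
  induction l with
  | nil => simp [conjList, sem]
  | cons c l ih => simp [conjList, sem, ← ih]

def full : Interp C R := ⟨PUnit, fun _ => Set.univ, fun _ => Set.univ⟩

theorem mem_full_sem (E : ELC C R) (x : (full : Interp C R).dom) : x ∈ full.sem E := by
  induction E with
  | top | cn _ => trivial
  | conj c d ihc ihd => exact ⟨ihc, ihd⟩
  | ex r c ih => exact ⟨x, trivial, ih⟩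

theorem exists_isModel_mem_sem (c : ELC C R) :
    ∃ I : Interp C R, I.IsModel T ∧ ∃ x, x ∈ I.sem c :=
  ⟨full, fun _ _ => ⟨fun x _ => mem_full_sem _ x, fun _ _ _ => trivial⟩, PUnit.unit,
    mem_full_sem c _⟩

theorem exists_isModel_mem_sem_not_mem_of_imp {c d : ELC C R} {φ : Prop}
    (h : φ → ¬ AEnt T c d) : ∃ I : Interp C R, I.IsModel T ∧ ∃ x ∈ I.sem c, φ → x ∉ I.sem d := by
  by_cases hφ : φ
  · obtain ⟨I, hI, x, hc, hd⟩ := not_aEnt_iff.1 (h hφ)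
    exact ⟨I, hI, x, hc, fun _ => hd⟩
  · obtain ⟨I, hI, x, hc⟩ := exists_isModel_mem_sem (T := T) c
    exact ⟨I, hI, x, hc, fun h => absurd h hφ⟩

def sigma {J : Type} (I : J → Interp C R) : Interp C R where
  dom := Σ j, (I j).dom
  cname Q := {x | x.2 ∈ (I x.1).cname Q}
  rname s := {p | ∃ j y y', (y, y') ∈ (I j).rname s ∧ p = (⟨j, y⟩, ⟨j, y'⟩)}

theorem mk_mem_sigma_sem {J : Type} (I : J → Interp C R) (E : ELC C R) (j : J) (y : (I j).dom) :
    (⟨j, y⟩ : (sigma I).dom) ∈ (sigma I).sem E ↔ y ∈ (I j).sem E := by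
  induction E generalizing y with
  | top | cn _ => rfl
  | conj c d ihc ihd => exact and_congr (ihc y) (ihd y)
  | ex s c ih =>
    constructor
    · rintro ⟨_, ⟨j', y₁, y₂, hy, hp⟩, hc⟩
      cases hp
      exact ⟨y₂, hy, (ih y₂).1 hc⟩
    · rintro ⟨y', hy, hc⟩
      exact ⟨⟨j, y'⟩, ⟨j, y, y', hy, rfl⟩, (ih y').2 hc⟩

theorem IsModel.sigma {J : Type} {I : J → Interp C R} (hI : ∀ j, (I j).IsModel T) :
    (sigma I).IsModel T := by
  intro ax hax
  refine ⟨fun ⟨j, y⟩ hy => ?_, fun heq ⟨j, y⟩ hy => ?_⟩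
  · exact (mk_mem_sigma_sem I _ j y).2 ((hI j ax hax).1 hy)
  · exact (hI j ax hax).2 heq ((mk_mem_sigma_sem I _ j y).1 hy)

def addRoot (I : Interp C R) (S : Set C) (succ : R → Set I.dom) : Interp C R where
  dom := Option I.dom
  cname Q := {x | x.elim (Q ∈ S) (· ∈ I.cname Q)}
  rname s := {p | match p with
    | (none, some y) => y ∈ succ s
    | (some x, some y) => (x, y) ∈ I.rname s
    | (_, none) => False}

variable {I : Interp C R} {S : Set C} {succ : R → Set I.dom}

theorem some_mem_addRoot_sem {E : ELC C R} {x : I.dom} :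
    some x ∈ (I.addRoot S succ).sem E ↔ x ∈ I.sem E := by
  induction E generalizing x with
  | top | cn _ => rfl
  | conj c d ihc ihd => exact and_congr ihc ihd
  | ex s c ih =>
    constructor
    · rintro ⟨_ | y, hxy, hc⟩
      · exact hxy.elim
      · exact ⟨y, hxy, ih.1 hc⟩
    · rintro ⟨y, hxy, hc⟩
      exact ⟨some y, hxy, ih.2 hc⟩

theorem none_mem_addRoot_sem_ex {s : R} {c : ELC C R} :
    none ∈ (I.addRoot S succ).sem (.ex s c) ↔ ∃ y ∈ succ s, y ∈ I.sem c := by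
  constructor
  · rintro ⟨_ | y, hy, hc⟩
    · exact hy.elim
    · exact ⟨y, hy, some_mem_addRoot_sem.1 hc⟩
  · rintro ⟨y, hy, hc⟩
    exact ⟨some y, hy, some_mem_addRoot_sem.2 hc⟩

theorem addRoot_sem_mono {S' : Set C} (hS : S ⊆ S') {E : ELC C R} {x : Option I.dom}
    (hx : x ∈ (I.addRoot S succ).sem E) : x ∈ (I.addRoot S' succ).sem E := by
  induction E generalizing x with
  | top => trivial
  | cn Q =>
    cases x
    exacts [hS hx, hx]
  | conj c d ihc ihd => exact ⟨ihc hx.1, ihd hx.2⟩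
  | ex s c ih =>
    obtain ⟨y, hxy, hc⟩ := hx
    exact ⟨y, hxy, ih hc⟩

theorem none_mem_addRoot_sem_of_simulation {K : Interp C R} {x : K.dom} {g : K.dom → I.dom}
    (hg : ∀ E y, y ∈ K.sem E → g y ∈ I.sem E) (hS : ∀ Q, x ∈ K.cname Q → Q ∈ S)
    (hsucc : ∀ s y, (x, y) ∈ K.rname s → g y ∈ succ s) {E : ELC C R} (hx : x ∈ K.sem E) :
    none ∈ (I.addRoot S succ).sem E := by
  induction E with
  | top => trivial
  | cn Q => exact hS Q hx
  | conj c d ihc ihd => exact ⟨ihc hx.1, ihd hx.2⟩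
  | ex s c _ =>
    obtain ⟨y, hxy, hy⟩ := hx
    exact none_mem_addRoot_sem_ex.2 ⟨g y, hsucc s y hxy, hg c y hy⟩

theorem IsModel.addRoot (hI : I.IsModel T)
    (hlhs : ∀ ax ∈ T, ax.lhs ∈ S → none ∈ (I.addRoot S succ).sem ax.rhs)
    (hdef : ∀ ax ∈ T, ax.isEq = true → none ∈ (I.addRoot S succ).sem ax.rhs → ax.lhs ∈ S) :
    (I.addRoot S succ).IsModel T := by
  intro ax hax
  refine ⟨fun x hx => ?_, fun heq x hx => ?_⟩
  · cases x with
    | none => exact hlhs ax hax hx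
    | some y => exact some_mem_addRoot_sem.2 ((hI ax hax).1 hx)
  · cases x with
    | none => exact hdef ax hax heq hx
    | some y => exact (hI ax hax).2 heq (some_mem_addRoot_sem.1 hx)

theorem exists_isModel_addRoot (hT : T.Pairwise (fun a b => a.lhs ≠ b.lhs)) (hI : I.IsModel T)
    (S₀ : Set C)
    (h₀ : ∀ S, S₀ ⊆ S → ∀ ax ∈ T, ax.lhs ∈ S₀ → none ∈ (I.addRoot S succ).sem ax.rhs) :
    ∃ S, S₀ ⊆ S ∧ (∀ Q ∈ S, Q ∈ S₀ ∨ ∃ ax ∈ T, ax.lhs = Q ∧ ax.isEq = true) ∧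
      (I.addRoot S succ).IsModel T := by
  let F : Set C →o Set C :=
    { toFun S := S₀ ∪ {Q | ∃ ax ∈ T, ax.lhs = Q ∧ ax.isEq = true ∧
        none ∈ (I.addRoot S succ).sem ax.rhs}
      monotone' S S' hS := Set.union_subset_union_right _ fun _ ⟨ax, hax, hQ, heq, hrhs⟩ =>
        ⟨ax, hax, hQ, heq, addRoot_sem_mono hS hrhs⟩ }
  have hfix : F (OrderHom.lfp F) = OrderHom.lfp F := F.map_lfp
  have hsub : S₀ ⊆ OrderHom.lfp F := hfix ▸ Set.subset_union_left
  refine ⟨OrderHom.lfp F, hsub, fun Q hQ => ?_, hI.addRoot (fun ax hax hlhs => ?_) ?_⟩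
  · rw [← hfix] at hQ
    rcases hQ with hQ | ⟨ax, hax, hQ, heq, -⟩
    exacts [Or.inl hQ, Or.inr ⟨ax, hax, hQ, heq⟩]
  · rw [← hfix] at hlhs
    rcases hlhs with hlhs | ⟨ax', hax', hlhs, -, hrhs⟩
    · exact h₀ _ hsub ax hax hlhs
    · have hunique := List.inj_on_of_nodup_map (List.pairwise_map.2 hT) hax' hax hlhs
      exact hunique ▸ hrhs
  · intro ax hax heq hrhs
    rw [← hfix]
    exact Or.inr ⟨ax, hax, rfl, heq, hrhs⟩

end Interp

section Gluing

variable {C R : Type} {T : List (AxEL C R)} {ι κ : Type}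
  (M : ι → Interp C R) (m : ∀ i, (M i).dom) (N : κ → Interp C R) (n : ∀ k, (N k).dom) (ρ : κ → R)

theorem exists_isModel_glued (hT : T.Pairwise (fun a b => a.lhs ≠ b.lhs))
    (hM : ∀ i, (M i).IsModel T) (hN : ∀ k, (N k).IsModel T) :
    ∃ (I : Interp C R) (x : I.dom), I.IsModel T ∧
      (∀ i E, m i ∈ (M i).sem E → x ∈ I.sem E) ∧
      (∀ k E, n k ∈ (N k).sem E → x ∈ I.sem (.ex (ρ k) E)) ∧
      (∀ Q, x ∈ I.cname Q →
        (∃ i, m i ∈ (M i).cname Q) ∨ ∃ ax ∈ T, ax.lhs = Q ∧ ax.isEq = true) ∧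
      (∀ s E, x ∈ I.sem (.ex s E) →
        (∃ i, m i ∈ (M i).sem (.ex s E)) ∨ ∃ k, ρ k = s ∧ n k ∈ (N k).sem E) := by
  let J := Interp.sigma (Sum.elim M N)
  let succ : R → Set J.dom := fun s =>
    {z | ∃ i y, (m i, y) ∈ (M i).rname s ∧ z = ⟨.inl i, y⟩} ∪ {z | ∃ k, ρ k = s ∧ z = ⟨.inr k, n k⟩}
  let S₀ : Set C := {Q | ∃ i, m i ∈ (M i).cname Q}
  have hroot : ∀ S, S₀ ⊆ S → ∀ i E, m i ∈ (M i).sem E → none ∈ (J.addRoot S succ).sem E :=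
    fun S hS i _ hE => Interp.none_mem_addRoot_sem_of_simulation (K := M i)
      (fun E y => (Interp.mk_mem_sigma_sem (Sum.elim M N) E (Sum.inl i) y).2)
      (fun Q hQ => hS ⟨i, hQ⟩) (fun _ y hy => Or.inl ⟨i, y, hy, rfl⟩) hE
  have hJ : J.IsModel T := Interp.IsModel.sigma (by rintro (i | k); exacts [hM i, hN k])
  obtain ⟨S, hS₀, hS, hmodel⟩ := Interp.exists_isModel_addRoot hT hJ S₀
    (fun S hS ax hax ⟨i, hi⟩ => hroot S hS i _ ((hM i ax hax).1 hi))
  refine ⟨J.addRoot S succ, none, hmodel, hroot S hS₀, fun k E hE => ?_, hS, fun s E hx => ?_⟩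
  · exact Interp.none_mem_addRoot_sem_ex.2
      ⟨_, Or.inr ⟨k, rfl, rfl⟩, (Interp.mk_mem_sigma_sem (Sum.elim M N) E (Sum.inr k) _).2 hE⟩
  · obtain ⟨_, ⟨i, y, hy, rfl⟩ | ⟨k, rfl, rfl⟩, hE⟩ := Interp.none_mem_addRoot_sem_ex.1 hx
    · exact Or.inl ⟨i, y, hy, (Interp.mk_mem_sigma_sem (Sum.elim M N) E (Sum.inl i) y).1 hE⟩
    · exact Or.inr ⟨k, rfl, (Interp.mk_mem_sigma_sem (Sum.elim M N) E (Sum.inr k) _).1 hE⟩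

end Gluing

theorem exists_witness_of_aEnt_conjList {C R : Type} {T : List (AxEL C R)}
    (hT : T.Pairwise (fun a b => a.lhs ≠ b.lhs)) {As : List C} {Rs : List (R × ELC C R)}
    {D : ELC C R} (h : AEnt T (conjList (As.map ELC.cn ++ Rs.map fun p => ELC.ex p.1 p.2)) D)
    (M : {a // a ∈ As} → Interp C R) (m : ∀ a, (M a).dom) (hM : ∀ a, (M a).IsModel T)
    (hmA : ∀ a, m a ∈ (M a).cname a)
    (N : {p // p ∈ Rs} → Interp C R) (n : ∀ p, (N p).dom) (hN : ∀ p, (N p).IsModel T)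
    (hnC : ∀ p, n p ∈ (N p).sem p.1.2) :
    (∀ P, D = .cn P → (∃ a, m a ∈ (M a).cname P) ∨ ∃ ax ∈ T, ax.lhs = P ∧ ax.isEq = true) ∧
    (∀ r D', D = .ex r D' →
      (∃ a, m a ∈ (M a).sem (.ex r D')) ∨ ∃ p : {p // p ∈ Rs}, p.1.1 = r ∧ n p ∈ (N p).sem D') := by
  obtain ⟨I, x, hI, hxM, hxN, hname, hex⟩ := exists_isModel_glued M m N n (fun p => p.1.1) hT hM hN
  have hx : x ∈ I.sem D := h I hI <| Interp.mem_sem_conjList.2 fun c hc => by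
    rcases List.mem_append.1 hc with hc | hc
    · obtain ⟨a, ha, rfl⟩ := List.mem_map.1 hc
      exact hxM ⟨a, ha⟩ _ (hmA ⟨a, ha⟩)
    · obtain ⟨p, hp, rfl⟩ := List.mem_map.1 hc
      exact hxN ⟨p, hp⟩ _ (hnC ⟨p, hp⟩)
  refine ⟨?_, ?_⟩
  · rintro P rfl
    exact hname P hx
  · rintro r D' rfl
    exact hex r D' hx

/-- characterisation of entailment from an acyclic EL TBox.
If `T ⊨ A_1 ⊓ … ⊓ A_n ⊓ ∃r_1.C_1 ⊓ … ⊓ ∃r_m.C_m ⊑ D`, then: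
(a) if `D` is a concept name without a defining equivalence in `T`, some
`A_i` satisfies `T ⊨ A_i ⊑ D`; (b) if `D = ∃r.D'`, then either some `A_i`
satisfies `T ⊨ A_i ⊑ ∃r.D'`, or some `r_j = r` with `T ⊨ C_j ⊑ D'`. -/
theorem acyclic_entailment_characterisation {C R : Type}
    (T : List (AxEL C R)) (hT : AcyclicTBox T)
    (As : List C) (Rs : List (R × ELC C R)) (D : ELC C R)
    (h : AEnt T (conjList (As.map ELC.cn ++ Rs.map fun p => ELC.ex p.1 p.2)) D) :
    (∀ P : C, D = .cn P → (∀ ax ∈ T, ax.lhs = P → ax.isEq = false) →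
      ∃ a ∈ As, AEnt T (.cn a) D) ∧
    (∀ (r : R) (D' : ELC C R), D = .ex r D' →
      (∃ a ∈ As, AEnt T (.cn a) (.ex r D')) ∨
      ∃ p ∈ Rs, p.1 = r ∧ AEnt T p.2 D') := by
  have hwitness := exists_witness_of_aEnt_conjList hT.1 h
  refine ⟨?_, ?_⟩
  · rintro P rfl hprim
    by_contra! hcon
    choose M hM m hmA hmP using fun a : {a // a ∈ As} => Interp.not_aEnt_iff.1 (hcon a a.2)
    choose N hN n hnC using fun p : {p // p ∈ Rs} => Interp.exists_isModel_mem_sem (T := T) p.1.2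
    rcases (hwitness M m hM hmA N n hN hnC).1 P rfl with ⟨a, ha⟩ | ⟨ax, hax, hP, heq⟩
    · exact hmP a ha
    · simp [hprim ax hax hP] at heq
  · rintro r D' rfl
    by_contra! hcon
    choose M hM m hmA hmD using fun a : {a // a ∈ As} => Interp.not_aEnt_iff.1 (hcon.1 a a.2)
    choose N hN n hnC hnD using fun p : {p // p ∈ Rs} =>
      Interp.exists_isModel_mem_sem_not_mem_of_imp (hcon.2 p p.2)
    rcases (hwitness M m hM hmA N n hN hnC).2 r D' rfl with ⟨a, ha⟩ | ⟨p, hr, hp⟩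
    · exact hmD a ha
    · exact hnD p hr hp
end

section
/- Let T be an acyclic EL TBox, A ⊑ C an axiom in T, and ∃t.D a concept expression where t is a role name. Then T ⊨ A ⊑ ∃t.D if and only if T ⊨ C ⊑ ∃t.D. -/
/-!
Only the forward direction needs an argument. Given a model `I` of `T` and `x ∈ Cᴵ`, add to `I`
a fresh point with the role successors of `x`. Label it with the least set of concept names
that contains `A` and every name true at `x`, and is closed under the definitions `B ≡ E` of `T`
whose right-hand side holds at the new point. Since `A` has only the one axiom `A ⊑ C`, whose
right-hand side already holds at `x`, the extension is again a model of `T`; the new point lies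
in `A`, hence in `∃t.D`, and its `t`-successors are exactly those of `x`.
-/

namespace Interp

variable {C R : Type}

/-- `none` is the fresh point: it has the role successors of `x` and the concept names in `S`. -/
def addPoint (I : Interp C R) (x : I.dom) (S : Set C) : Interp C R where
  dom := Option I.dom
  cname B := {z | z.elim (B ∈ S) (· ∈ I.cname B)}
  rname r := {p | ∃ z, p.2 = some z ∧ (p.1.getD x, z) ∈ I.rname r}

variable (I : Interp C R) (x : I.dom)

theorem some_mem_sem_addPoint_iff (S : Set C) (e : ELC C R) (z : I.dom) :
    some z ∈ (I.addPoint x S).sem e ↔ z ∈ I.sem e := by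
  induction e generalizing z with
  | top | cn => rfl
  | conj c d ihc ihd => exact and_congr (ihc z) (ihd z)
  | ex r c ih =>
    constructor
    · rintro ⟨_, ⟨y, rfl, hzy⟩, hy⟩
      exact ⟨y, hzy, (ih y).mp hy⟩
    · rintro ⟨y, hzy, hy⟩
      exact ⟨some y, ⟨y, rfl, hzy⟩, (ih y).mpr hy⟩

theorem none_mem_sem_addPoint_ex_iff (S : Set C) (r : R) (c : ELC C R) :
    none ∈ (I.addPoint x S).sem (.ex r c) ↔ x ∈ I.sem (.ex r c) := by
  constructor
  · rintro ⟨_, ⟨y, rfl, hxy⟩, hy⟩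
    exact ⟨y, hxy, (some_mem_sem_addPoint_iff I x S c y).mp hy⟩
  · rintro ⟨y, hxy, hy⟩
    exact ⟨some y, ⟨y, rfl, hxy⟩, (some_mem_sem_addPoint_iff I x S c y).mpr hy⟩

theorem none_mem_sem_addPoint_mono {S S' : Set C} (hSS' : S ⊆ S') (e : ELC C R) :
    none ∈ (I.addPoint x S).sem e → none ∈ (I.addPoint x S').sem e := by
  induction e with
  | top => exact id
  | cn B => exact fun hB => hSS' hB
  | conj c d ihc ihd => exact fun ⟨hc, hd⟩ => ⟨ihc hc, ihd hd⟩
  | ex r c =>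
    simp only [none_mem_sem_addPoint_ex_iff]
    exact id

theorem none_mem_sem_addPoint_of_mem {S : Set C} (hS : ∀ B, x ∈ I.cname B → B ∈ S)
    (e : ELC C R) (hx : x ∈ I.sem e) : none ∈ (I.addPoint x S).sem e := by
  induction e with
  | top => trivial
  | cn B => exact hS B hx
  | conj c d ihc ihd => exact ⟨ihc hx.1, ihd hx.2⟩
  | ex r c => exact (none_mem_sem_addPoint_ex_iff I x S r c).mpr hx

def labelStep (T : List (AxEL C R)) (A : C) : Set C →o Set C where
  toFun S := {B | B = A ∨ x ∈ I.cname B ∨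
    ∃ b ∈ T, b.lhs = B ∧ b.isEq = true ∧ none ∈ (I.addPoint x S).sem b.rhs}
  monotone' S S' hSS' B := by
    rintro (hA | hx | ⟨b, hb, rfl, hEq, hrhs⟩)
    · exact Or.inl hA
    · exact Or.inr (Or.inl hx)
    · exact Or.inr (Or.inr ⟨b, hb, rfl, hEq, none_mem_sem_addPoint_mono I x hSS' _ hrhs⟩)

def labels (T : List (AxEL C R)) (A : C) : Set C :=
  OrderHom.lfp (I.labelStep x T A)

theorem mem_labels_iff (T : List (AxEL C R)) (A B : C) :
    B ∈ I.labels x T A ↔ B = A ∨ x ∈ I.cname B ∨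
      ∃ b ∈ T, b.lhs = B ∧ b.isEq = true ∧ none ∈ (I.addPoint x (I.labels x T A)).sem b.rhs := by
  conv_lhs => rw [labels, ← OrderHom.map_lfp]
  rfl

theorem satAx_addPoint_labels {T : List (AxEL C R)} (hT : (T.map AxEL.lhs).Nodup)
    (hI : ∀ b ∈ T, satAx I b) {ax : AxEL C R} (hax : ax ∈ T) (hx : x ∈ I.sem ax.rhs) :
    ∀ b ∈ T, satAx (I.addPoint x (I.labels x T ax.lhs)) b := by
  have hS : ∀ B, x ∈ I.cname B → B ∈ I.labels x T ax.lhs :=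
    fun B hB => (I.mem_labels_iff x T _ B).mpr (Or.inr (Or.inl hB))
  intro b hb
  constructor
  · rintro (_ | z) hz
    · rcases (I.mem_labels_iff x T _ _).mp hz with hA | hxb | ⟨a, ha, hab, -, hrhs⟩
      · obtain rfl := List.inj_on_of_nodup_map hT hb hax hA
        exact I.none_mem_sem_addPoint_of_mem x hS _ hx
      · exact I.none_mem_sem_addPoint_of_mem x hS _ ((hI b hb).1 hxb)
      · obtain rfl := List.inj_on_of_nodup_map hT ha hb hab
        exact hrhs
    · exact (I.some_mem_sem_addPoint_iff x _ _ z).mpr ((hI b hb).1 hz)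
  · rintro hEq (_ | z) hz
    · exact (I.mem_labels_iff x T _ _).mpr (Or.inr (Or.inr ⟨b, hb, rfl, hEq, hz⟩))
    · exact (hI b hb).2 hEq ((I.some_mem_sem_addPoint_iff x _ _ z).mp hz)

end Interp

/-- for an acyclic EL TBox `T`, an axiom `A ⊑ C` in `T`, and
a concept `∃t.D`: `T ⊨ A ⊑ ∃t.D` iff `T ⊨ C ⊑ ∃t.D`. -/
theorem acyclic_ex_entailment_iff {C R : Type}
    (T : List (AxEL C R)) (hT : AcyclicTBox T) (ax : AxEL C R) (hax : ax ∈ T)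
    (t : R) (D : ELC C R) :
    AEnt T (.cn ax.lhs) (.ex t D) ↔ AEnt T ax.rhs (.ex t D) := by
  refine ⟨fun h I hI x hx => ?_, fun h I hI x hx => h I hI ((hI ax hax).1 hx)⟩
  have hlhs : (T.map AxEL.lhs).Nodup := List.pairwise_map.mpr hT.1
  have hmodel := I.satAx_addPoint_labels x hlhs hI hax hx
  have hA : none ∈ (I.addPoint x (I.labels x T ax.lhs)).sem (.cn ax.lhs) :=
    (I.mem_labels_iff x T _ _).mpr (Or.inl rfl)
  exact (I.none_mem_sem_addPoint_ex_iff x _ t D).mp (h _ hmodel hA)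
end
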